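/- arXiv:1612.07540 — 4 statements merged into one kernel-verified Lean document; each statement's English description precedes it below -/
import Mathlib

section
/- A nonempty set I of incomparable pairs of a finite poset P is reversible if and only if I contains no strict alternating cycle. -/
section Defs
variable (α : Type*) [PartialOrder α]

/-- `L` is a linear extension of the partial order on `α`. -/
def IsLinExt (L : LinearOrder α) : Prop := ∀ x y : α, x ≤ y → L.le x y

/-- The poset `α` is the intersection of `d` linear extensions. -/
def HasRealizer (d : ℕ) : Prop :=
  ∃ Ls : Fin d → LinearOrder α, (∀ i, IsLinExt α (Ls i)) ∧
    ∀ x y : α, (∀ i, (Ls i).le x y) → x ≤ y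

/-- The order dimension of the poset `α`. -/
noncomputable def pdim : ℕ := sInf {d | HasRealizer α d}

/-- `x` and `y` are incomparable. -/
def IncompP (x y : α) : Prop := ¬ x ≤ y ∧ ¬ y ≤ x

/-- A set of (incomparable) pairs is reversible if some linear extension reverses all pairs. -/
def ReversibleSet (I : Set (α × α)) : Prop :=
  ∃ L : LinearOrder α, IsLinExt α L ∧ ∀ p ∈ I, L.lt p.2 p.1

/-- `I` can be partitioned into `d` reversible sets. -/
def RevPart (I : Set (α × α)) (d : ℕ) : Prop :=
  ∃ J : Fin d → Set (α × α), (⋃ i, J i) = I ∧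
    (∀ i j, i ≠ j → Disjoint (J i) (J j)) ∧ ∀ i, ReversibleSet α (J i)

/-- The least number of reversible sets partitioning `I` (with `revDim ∅ = 1`). -/
noncomputable def revDim (I : Set (α × α)) : ℕ := sInf {d | 0 < d ∧ RevPart α I d}

/-- Incomparable pairs `(a,b)` with `a ∈ A` and `b ∈ B`. -/
def IncPairs (A B : Set α) : Set (α × α) := {p | p.1 ∈ A ∧ p.2 ∈ B ∧ IncompP α p.1 p.2}

noncomputable def dimAB (A B : Set α) : ℕ := revDim α (IncPairs α A B)

/-- The minimal elements of `α`. -/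
def minimalSet : Set α := {x | ∀ y : α, y ≤ x → y = x}

/-- The maximal elements of `α`. -/
def maximalSet : Set α := {x | ∀ y : α, x ≤ y → y = x}

end Defs

/-! A linear extension reversing `I` would give `y₀ < x₀ ≤ y₁ < x₁ ≤ ⋯ ≤ y₀` along an alternating
cycle. Conversely, when there is no alternating cycle, the relation generated by `≤` and the reversed
pairs `y → x` is antisymmetric, since a closed walk through a reversed pair is an alternating cycle;
by Szpilrajn's theorem it extends to a linear order, which reverses `I`. Finally, a shortest
alternating cycle is strict: a comparability `xᵢ ≤ yⱼ` with `j ≠ i + 1` cuts out a shorter cycle. -/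

section AlternatingCycles

open Fin.NatCast Fin.CommRing

theorem Fin.val_sub_lt_of_ne_add_one {n : ℕ} {i j : Fin (n + 1)} (h : j ≠ i + 1) :
    (i - j).val < n := by
  refine (Nat.lt_succ_iff.mp (i - j).isLt).lt_of_ne fun hn => h ?_
  have hneg : i - j = -1 := Fin.ext (by rw [hn, Fin.coe_neg_one])
  linear_combination -hneg

theorem Fin.exists_apply_add_one_le {β : Type*} [LinearOrder β] {n : ℕ} (f : Fin (n + 1) → β) :
    ∃ i, f (i + 1) ≤ f i :=
  (Finite.exists_max f).imp fun _ hi => hi _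

theorem exists_linearOrder_of_reflTransGen_antisymm {α : Type*} {r : α → α → Prop}
    (h : ∀ a b, Relation.ReflTransGen r a b → Relation.ReflTransGen r b a → a = b) :
    ∃ L : LinearOrder α, ∀ a b, r a b → L.le a b := by
  let _ : PartialOrder α :=
    { le := Relation.ReflTransGen r
      le_refl := fun _ => .refl
      le_trans := fun _ _ _ => .trans
      le_antisymm := h }
  exact ⟨(inferInstance : LinearOrder (LinearExtension α)),
    fun a b hab => toLinearExtension.monotone (.single hab)⟩

variable {α : Type*} [PartialOrder α] {I : Set (α × α)}

variable (I) in
/-- Indices are cyclic (`i + 1` wraps around in `Fin (n + 1)`), and a single pair is allowed. -/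
def IsAltCycle {n : ℕ} (x y : Fin (n + 1) → α) : Prop :=
  (∀ i, (x i, y i) ∈ I) ∧ ∀ i, x i ≤ y (i + 1)

theorem ReversibleSet.not_isAltCycle (hI : ReversibleSet α I) {n : ℕ} {x y : Fin (n + 1) → α} :
    ¬ IsAltCycle I x y := by
  rintro ⟨hmem, hle⟩
  obtain ⟨L, hL, hrev⟩ := hI
  obtain ⟨i, hi⟩ := @Fin.exists_apply_add_one_le α L n y
  exact @not_lt_of_ge α L.toPreorder _ _ hi
    (@lt_of_lt_of_le α L.toPreorder _ _ _ (hrev _ (hmem i)) (hL _ _ (hle i)))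

/-- The arc of the cycle from `j` round to `i`, closed up by `x i ≤ y j`. -/
theorem IsAltCycle.shortcut {n : ℕ} {x y : Fin (n + 1) → α} (hc : IsAltCycle I x y)
    {i j : Fin (n + 1)} (hij : x i ≤ y j) :
    IsAltCycle I (fun t : Fin ((i - j).val + 1) => x (j + t.val)) (fun t => y (j + t.val)) := by
  refine ⟨fun t => hc.1 _, fun t => ?_⟩
  dsimp only
  rw [Fin.val_add_one]
  split_ifs with ht
  · subst ht
    simpa using hij
  · have hlt : t.val < (i - j).val := Fin.val_lt_last ht
    simpa [add_assoc] using hc.2 (j + t.val)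

theorem IsAltCycle.exists_strict (hI : ∀ p ∈ I, ¬ p.1 ≤ p.2) {n : ℕ} {x y : Fin (n + 1) → α}
    (hc : IsAltCycle I x y) :
    ∃ (k : ℕ) (x y : Fin (k + 2) → α), (∀ i, (x i, y i) ∈ I) ∧ ∀ i j, x i ≤ y j ↔ j = i + 1 := by
  induction n using Nat.strong_induction_on with
  | _ n ih =>
  by_cases hstrict : ∀ i j, x i ≤ y j → j = i + 1
  · obtain _ | k := n
    · -- in `Fin 1`, `0 + 1 = 0`
      exact absurd (hc.2 0) (by simpa using hI _ (hc.1 0))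
    · exact ⟨k, x, y, hc.1, fun i j => ⟨hstrict i j, fun h => h ▸ hc.2 i⟩⟩
  · push Not at hstrict
    obtain ⟨i, j, hij, hne⟩ := hstrict
    exact ih _ (Fin.val_sub_lt_of_ne_add_one hne) (hc.shortcut hij)

variable (I) in
/-- `AltWalk I a b [p₁, …, pₘ]` says `a ≤ p₁.2`, `pᵢ.1 ≤ pᵢ₊₁.2` and `pₘ.1 ≤ b`, with all `pᵢ ∈ I`.
For `m = 0` it says `a ≤ b`. -/
def AltWalk : α → α → List (α × α) → Prop
  | a, b, [] => a ≤ b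
  | a, b, p :: l => p ∈ I ∧ a ≤ p.2 ∧ AltWalk p.1 b l

namespace AltWalk

variable {a a' b c : α} {l l' : List (α × α)}

theorem mono_left (h : a ≤ a') (hw : AltWalk I a' b l) : AltWalk I a b l := by
  cases l with
  | nil => exact h.trans hw
  | cons p l => exact ⟨hw.1, h.trans hw.2.1, hw.2.2⟩

theorem append (h : AltWalk I a b l) (h' : AltWalk I b c l') : AltWalk I a c (l ++ l') := by
  induction l generalizing a with
  | nil => exact h'.mono_left h
  | cons p l ih => exact ⟨h.1, h.2.1, ih h.2.2⟩

theorem exists_of_reflTransGen (h : Relation.ReflTransGen (fun a b => a ≤ b ∨ (b, a) ∈ I) a b) :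
    ∃ l, AltWalk I a b l := by
  induction h using Relation.ReflTransGen.head_induction_on with
  | refl => exact ⟨[], le_rfl⟩
  | head hstep _ ih =>
    obtain ⟨l, hl⟩ := ih
    rcases hstep with hle | hmem
    · exact ⟨l, hl.mono_left hle⟩
    · exact ⟨_ :: l, hmem, le_rfl, hl⟩

theorem mem (h : AltWalk I a b l) {p : α × α} (hp : p ∈ l) : p ∈ I := by
  induction l generalizing a with
  | nil => simp at hp
  | cons q l ih =>
    rcases List.mem_cons.mp hp with rfl | hp
    exacts [h.1, ih h.2.2 hp]

theorem le_head (h : AltWalk I a b l) : a ≤ (l.head?.map Prod.snd).getD b := by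
  cases l with
  | nil => exact h
  | cons p l => exact h.2.1

theorem drop (h : AltWalk I a b l) (i : ℕ) (hi : i < l.length) :
    AltWalk I l[i].1 b (l.drop (i + 1)) := by
  induction l generalizing a i with
  | nil => simp at hi
  | cons p l ih =>
    cases i with
    | zero => exact h.2.2
    | succ i => exact ih h.2.2 i (by simpa using hi)

theorem getElem_fst_le (h : AltWalk I a b l) (i : ℕ) (hi : i < l.length) :
    l[i].1 ≤ (l[i + 1]?.map Prod.snd).getD b := by
  simpa [List.head?_drop] using (h.drop i hi).le_head

theorem exists_isAltCycle (h : AltWalk I a a l) (hl : l ≠ []) :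
    ∃ (n : ℕ) (x y : Fin (n + 1) → α), IsAltCycle I x y := by
  obtain ⟨n, hn⟩ := Nat.exists_eq_succ_of_ne_zero (List.length_pos_iff.mpr hl).ne'
  refine ⟨n, fun i => l[i.val].1, fun i => l[i.val].2, fun i => h.mem (List.getElem_mem _),
    fun i => ?_⟩
  have hstep := h.getElem_fst_le i (by omega)
  by_cases hi : i = Fin.last n
  · subst hi
    obtain ⟨p, l, rfl⟩ := List.exists_cons_of_ne_nil hl
    have hnone : (p :: l)[n + 1]? = none := List.getElem?_eq_none hn.le
    simp only [Fin.val_last, hnone, Option.map_none, Option.getD_none] at hstep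
    simpa using hstep.trans h.le_head
  · have hlt : i.val + 1 < l.length := by have := Fin.val_lt_last hi; omega
    simpa [List.getElem?_eq_getElem hlt, Fin.val_add_one, hi] using hstep

end AltWalk

theorem reflTransGen_antisymm_of_forall_not_isAltCycle
    (h : ∀ (n : ℕ) (x y : Fin (n + 1) → α), ¬ IsAltCycle I x y) (a b : α)
    (hab : Relation.ReflTransGen (fun a b => a ≤ b ∨ (b, a) ∈ I) a b)
    (hba : Relation.ReflTransGen (fun a b => a ≤ b ∨ (b, a) ∈ I) b a) : a = b := by
  obtain ⟨l, hl⟩ := AltWalk.exists_of_reflTransGen hab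
  obtain ⟨l', hl'⟩ := AltWalk.exists_of_reflTransGen hba
  by_cases hnil : l ++ l' = []
  · obtain ⟨rfl, rfl⟩ := List.append_eq_nil_iff.mp hnil
    exact le_antisymm hl hl'
  · obtain ⟨n, x, y, hc⟩ := (hl.append hl').exists_isAltCycle hnil
    exact (h n x y hc).elim

theorem reversibleSet_of_forall_not_isAltCycle (hI : ∀ p ∈ I, p.1 ≠ p.2)
    (h : ∀ (n : ℕ) (x y : Fin (n + 1) → α), ¬ IsAltCycle I x y) : ReversibleSet α I := by
  obtain ⟨L, hL⟩ :=
    exists_linearOrder_of_reflTransGen_antisymm (reflTransGen_antisymm_of_forall_not_isAltCycle h)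
  exact ⟨L, fun a b hab => hL a b (.inl hab),
    fun p hp => @lt_of_le_of_ne α L.toPartialOrder _ _ (hL _ _ (.inr hp)) (hI p hp).symm⟩

end AlternatingCycles

theorem stmt2_general {α : Type*} [PartialOrder α]
    (I : Set (α × α)) (hI : ∀ p ∈ I, IncompP α p.1 p.2) :
    ReversibleSet α I ↔
      ¬ ∃ (k : ℕ) (x y : Fin (k + 2) → α),
          (∀ i, (x i, y i) ∈ I) ∧ (∀ i j, x i ≤ y j ↔ j = i + 1) := by
  constructor
  · rintro hrev ⟨k, x, y, hmem, hstrict⟩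
    exact hrev.not_isAltCycle ⟨hmem, fun i => (hstrict i _).2 rfl⟩
  · intro hno
    refine reversibleSet_of_forall_not_isAltCycle (fun p hp heq => (hI p hp).1 heq.le)
      fun n x y hc => hno ?_
    exact hc.exists_strict fun p hp => (hI p hp).1

/-- a nonempty set of incomparable pairs is reversible iff it contains
no strict alternating cycle (a cycle has `k + 2 ≥ 2` pairs, indexed by `Fin (k+2)`). -/
theorem stmt2 {α : Type*} [Fintype α] [PartialOrder α]
    (I : Set (α × α)) (hne : I.Nonempty) (hI : ∀ p ∈ I, IncompP α p.1 p.2) :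
    ReversibleSet α I ↔
      ¬ ∃ (k : ℕ) (x y : Fin (k + 2) → α),
          (∀ i, (x i, y i) ∈ I) ∧ (∀ i j, x i ≤ y j ↔ j = i + 1) :=
  stmt2_general I hI
end

section
/- The order dimension of a finite poset is at most its width (the maximum size of an antichain). -/
open Finset

namespace Finset

variable {α : Type*} [PartialOrder α]

open Classical in
noncomputable def width (s : Finset α) : ℕ :=
  (s.powerset.filter fun A : Finset α => IsAntichain (· ≤ ·) (A : Set α)).sup card

theorem card_le_width {s A : Finset α} (hAs : A ⊆ s) (hA : IsAntichain (· ≤ ·) (A : Set α)) :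
    #A ≤ s.width := by
  classical
  exact le_sup (f := card) (mem_filter.2 ⟨mem_powerset.2 hAs, hA⟩)

theorem exists_isAntichain_card_eq_width (s : Finset α) :
    ∃ A ⊆ s, IsAntichain (· ≤ ·) (A : Set α) ∧ #A = s.width := by
  classical
  obtain ⟨A, hA, hAw⟩ :
      ∃ A ∈ s.powerset.filter fun A : Finset α => IsAntichain (· ≤ ·) (A : Set α), s.width = #A :=
    exists_mem_eq_sup _ ⟨∅, by simp [Set.subsingleton_empty.isAntichain]⟩ card
  obtain ⟨hAs, hAa⟩ := mem_filter.1 hA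
  exact ⟨A, mem_powerset.1 hAs, hAa, hAw.symm⟩

theorem width_mono {s t : Finset α} (hst : s ⊆ t) : s.width ≤ t.width := by
  obtain ⟨A, hAs, hA, hAw⟩ := s.exists_isAntichain_card_eq_width
  exact hAw ▸ card_le_width (hAs.trans hst) hA

end Finset

section Dilworth

variable {α : Type*} [PartialOrder α]

/-- `f` partitions `s` into the `k` chains `{x ∈ s | f x = i}`, `i < k`. -/
def IsChainColoring (s : Finset α) (k : ℕ) (f : α → ℕ) : Prop :=
  (∀ x ∈ s, f x < k) ∧ ∀ x ∈ s, ∀ y ∈ s, f x = f y → x ≤ y ∨ y ≤ x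

def MemMaxAntichain (s : Finset α) (x : α) : Prop :=
  ∃ A ⊆ s, IsAntichain (· ≤ ·) (A : Set α) ∧ #A = s.width ∧ x ∈ A

structure IsColorTop (s : Finset α) (f : α → ℕ) (i : ℕ) (t : α) : Prop where
  mem : t ∈ s
  color : f t = i
  memMaxAntichain : MemMaxAntichain s t
  le_of_memMaxAntichain : ∀ x ∈ s, f x = i → MemMaxAntichain s x → x ≤ t

namespace IsChainColoring

variable {s : Finset α} {k : ℕ} {f : α → ℕ}

theorem mono (hf : IsChainColoring s k f) {k' : ℕ} (hk : k ≤ k') : IsChainColoring s k' f :=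
  ⟨fun x hx => (hf.1 x hx).trans_le hk, hf.2⟩

theorem union_chain [DecidableEq α] (hf : IsChainColoring s k f) {C : Finset α}
    (hC : IsChain (· ≤ ·) (C : Set α)) :
    IsChainColoring (s ∪ C) (k + 1) (fun x => if x ∈ C then k else f x) := by
  have hsC : ∀ x ∈ s ∪ C, x ∉ C → x ∈ s := fun x hx hxC => (mem_union.1 hx).resolve_right hxC
  refine ⟨fun x hx => ?_, fun x hx y hy hxy => ?_⟩
  · dsimp only
    split_ifs with hxC
    · exact k.lt_succ_self
    · exact (hf.1 x (hsC x hx hxC)).trans k.lt_succ_self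
  · by_cases hxC : x ∈ C <;> by_cases hyC : y ∈ C <;> simp only [hxC, hyC, if_true, if_false] at hxy
    · exact hC.total hxC hyC
    · exact absurd hxy.symm (hf.1 y (hsC y hy hyC)).ne
    · exact absurd hxy (hf.1 x (hsC x hx hxC)).ne
    · exact hf.2 x (hsC x hx hxC) y (hsC y hy hyC) hxy

theorem exists_mem_color_eq (hf : IsChainColoring s k f) {A : Finset α} (hAs : A ⊆ s)
    (hA : IsAntichain (· ≤ ·) (A : Set α)) (hAk : k ≤ #A) {i : ℕ} (hi : i < k) :
    ∃ b ∈ A, f b = i := by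
  classical
  have hinj : Set.InjOn f A := fun x hx y hy hxy =>
    (hf.2 x (hAs hx) y (hAs hy) hxy).elim (hA.eq hx hy) (fun h => (hA.eq hy hx h).symm)
  have himg : A.image f = range k := eq_of_subset_of_card_le
    (fun j hj => by
      obtain ⟨x, hx, rfl⟩ := mem_image.1 hj
      exact mem_range.2 (hf.1 x (hAs hx)))
    (by rwa [card_image_of_injOn hinj, card_range])
  exact mem_image.1 (himg ▸ mem_range.2 hi)

theorem exists_isColorTop (hf : IsChainColoring s s.width f) {i : ℕ} (hi : i < s.width) :
    ∃ t, IsColorTop s f i t := by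
  classical
  obtain ⟨A, hAs, hA, hAw⟩ := s.exists_isAntichain_card_eq_width
  obtain ⟨b, hbA, hbi⟩ := hf.exists_mem_color_eq hAs hA hAw.ge hi
  set T := s.filter fun x => f x = i ∧ MemMaxAntichain s x
  obtain ⟨t, ht⟩ := T.exists_maximal ⟨b, mem_filter.2 ⟨hAs hbA, hbi, A, hAs, hA, hAw, hbA⟩⟩
  obtain ⟨hts, hti, htM⟩ := mem_filter.1 ht.prop
  refine ⟨t, hts, hti, htM, fun x hxs hxi hxM => ?_⟩
  exact (hf.2 x hxs t hts (hxi.trans hti.symm)).elim id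
    (ht.le_of_ge (mem_filter.2 ⟨hxs, hxi, hxM⟩))

theorem not_le_of_isColorTop (hf : IsChainColoring s s.width f) {i j : ℕ} {t t' : α}
    (ht : IsColorTop s f i t) (ht' : IsColorTop s f j t') (hij : i ≠ j) : ¬ t ≤ t' := by
  intro htt'
  obtain ⟨A, hAs, hA, hAw, ht'A⟩ := ht'.memMaxAntichain
  obtain ⟨b, hbA, hbi⟩ := hf.exists_mem_color_eq hAs hA hAw.ge (ht.color ▸ hf.1 t ht.mem)
  have hbt : b ≤ t := ht.le_of_memMaxAntichain b (hAs hbA) hbi ⟨A, hAs, hA, hAw, hbA⟩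
  have hbt' : b = t' := hA.eq hbA ht'A (hbt.trans htt')
  exact hij (by rw [← hbi, hbt', ht'.color])

theorem width_lt_of_forall_not_le (hf : IsChainColoring s s.width f) {i : ℕ} {t : α}
    (ht : IsColorTop s f i t) {u : Finset α} (hus : u ⊆ s) (hu : ∀ x ∈ u, f x = i → ¬ x ≤ t) :
    u.width < s.width := by
  obtain ⟨B, hBu, hB, hBw⟩ := u.exists_isAntichain_card_eq_width
  have hBs := hBu.trans hus
  refine hBw ▸ (card_le_width hBs hB).lt_of_ne fun hBw' => ?_
  obtain ⟨b, hbB, hbi⟩ := hf.exists_mem_color_eq hBs hB hBw'.ge (ht.color ▸ hf.1 t ht.mem)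
  exact hu b (hBu hbB) hbi (ht.le_of_memMaxAntichain b (hBs hbB) hbi ⟨B, hBs, hB, hBw', hbB⟩)

theorem width_lt_width_insert [DecidableEq α] (hf : IsChainColoring s s.width f)
    {t : Fin s.width → α} (ht : ∀ i : Fin s.width, IsColorTop s f i (t i)) {a : α} (ha : a ∉ s)
    (hat : ∀ i, ¬ a ≤ t i) (hta : ∀ i, ¬ t i ≤ a) : s.width < (insert a s).width := by
  have hne : ∀ i j, i ≠ j → ¬ t i ≤ t j := fun i j hij =>
    hf.not_le_of_isColorTop (ht i) (ht j) (Fin.val_ne_of_ne hij)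
  have hinj : Function.Injective t := fun i j hij => by
    by_contra h
    exact hne i j h hij.le
  have hanti : IsAntichain (· ≤ ·) ((insert a (univ.image t) : Finset α) : Set α) := by
    rw [coe_insert, coe_image, coe_univ, Set.image_univ]
    refine IsAntichain.insert ?_ ?_ ?_
    · rintro _ ⟨i, rfl⟩ _ ⟨j, rfl⟩ hij
      exact hne i j (ne_of_apply_ne t hij)
    · rintro _ ⟨i, rfl⟩ -
      exact hta i
    · rintro _ ⟨i, rfl⟩ -
      exact hat i
  have hsub : insert a (univ.image t) ⊆ insert a s :=
    insert_subset_insert a (image_subset_iff.2 fun i _ => (ht i).mem)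
  have hcard : #(insert a (univ.image t)) = s.width + 1 := by
    rw [card_insert_of_notMem fun h => ha (by
      obtain ⟨i, -, rfl⟩ := mem_image.1 h
      exact (ht i).mem), card_image_of_injective _ hinj, card_univ, Fintype.card_fin]
  have := card_le_width hsub hanti
  omega

theorem exists_isChainColoring_of_isColorTop_le [DecidableEq α] {a : α} (ha : a ∈ s)
    (hf : IsChainColoring (s.erase a) (s.erase a).width f) {i : ℕ} {t : α}
    (ht : IsColorTop (s.erase a) f i t) (hta : t ≤ a)
    (ih : ∀ u ⊂ s, ∃ g, IsChainColoring u u.width g) : ∃ g, IsChainColoring s s.width g := by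
  classical
  set K := insert a ((s.erase a).filter fun x => f x = i ∧ x ≤ t)
  have hK : IsChain (· ≤ ·) (K : Set α) := by
    rw [coe_insert, coe_filter]
    refine IsChain.insert (fun x hx y hy _ => ?_) fun x hx _ => Or.inr (hx.2.2.trans hta)
    exact hf.2 x hx.1 y hy.1 (hx.2.1.trans hy.2.1.symm)
  have hKs : K ⊆ s := insert_subset ha ((filter_subset _ _).trans (erase_subset a s))
  have hsK : s \ K ⊆ s.erase a := fun x hx =>
    mem_erase.2 ⟨fun h => (mem_sdiff.1 hx).2 (h ▸ mem_insert_self a _), (mem_sdiff.1 hx).1⟩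
  have hwidth : (s \ K).width < (s.erase a).width :=
    hf.width_lt_of_forall_not_le ht hsK fun x hx hxi hxt =>
      (mem_sdiff.1 hx).2 (mem_insert_of_mem (mem_filter.2 ⟨hsK hx, hxi, hxt⟩))
  obtain ⟨g, hg⟩ := ih (s \ K) (sdiff_ssubset hKs ⟨a, mem_insert_self a _⟩)
  have hgK := hg.union_chain hK
  rw [sdiff_union_of_subset hKs] at hgK
  exact ⟨_, hgK.mono (hwidth.trans_le (width_mono (erase_subset a s)))⟩

end IsChainColoring

theorem exists_isChainColoring_width (s : Finset α) : ∃ f, IsChainColoring s s.width f := by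
  classical
  induction s using Finset.strongInduction with
  | H s ih =>
  rcases s.eq_empty_or_nonempty with rfl | hs
  · exact ⟨fun _ => 0, by simp [IsChainColoring]⟩
  obtain ⟨a, ha⟩ := s.exists_maximal hs
  obtain ⟨f, hf⟩ := ih (s.erase a) (erase_ssubset ha.prop)
  choose t ht using fun i : Fin (s.erase a).width => hf.exists_isColorTop i.2
  by_cases hta : ∃ i, t i ≤ a
  · obtain ⟨i, hi⟩ := hta
    exact hf.exists_isChainColoring_of_isColorTop_le ha.prop (ht i) hi ih
  simp only [not_exists] at hta
  have hat : ∀ i, ¬ a ≤ t i := fun i hle =>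
    (mem_erase.1 (ht i).mem).1 (ha.eq_of_le (mem_of_mem_erase (ht i).mem) hle).symm
  have hwidth := hf.width_lt_width_insert ht (notMem_erase a s) hat hta
  have hfa := hf.union_chain (C := {a}) (by simp)
  rw [insert_erase ha.prop] at hwidth
  rw [union_singleton, insert_erase ha.prop] at hfa
  exact ⟨_, hfa.mono hwidth⟩

end Dilworth

section LinearExtension

variable {α : Type*}

noncomputable abbrev linearOrderOfIsLinearOrder (r : α → α → Prop) [IsLinearOrder α r] :
    LinearOrder α where
  le := r
  le_refl := refl_of r
  le_trans _ _ _ := trans_of r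
  le_antisymm _ _ := antisymm_of r
  le_total := total_of r
  toDecidableLE := Classical.decRel r

variable [PartialOrder α]

theorem exists_isLinExt_lt_of_not_le {C : Set α} (hC : IsChain (· ≤ ·) C) :
    ∃ L : LinearOrder α, IsLinExt α L ∧ ∀ c ∈ C, ∀ x, ¬ c ≤ x → L.lt x c := by
  let r : α → α → Prop := fun x y => x ≤ y ∨ ∃ c ∈ C, c ≤ y ∧ ¬ c ≤ x
  have : IsPartialOrder α r :=
    { refl := fun x => Or.inl le_rfl
      trans := by
        rintro x y z (hxy | ⟨u, hu, huy, hux⟩) (hyz | ⟨v, hv, hvz, hvy⟩)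
        · exact Or.inl (hxy.trans hyz)
        · exact Or.inr ⟨v, hv, hvz, fun hvx => hvy (hvx.trans hxy)⟩
        · exact Or.inr ⟨u, hu, huy.trans hyz, hux⟩
        · rcases hC.total hu hv with huv | hvu
          · exact Or.inr ⟨u, hu, huv.trans hvz, hux⟩
          · exact absurd (hvu.trans huy) hvy
      antisymm := by
        rintro x y (hxy | ⟨u, hu, huy, hux⟩) (hyx | ⟨v, hv, hvx, hvy⟩)
        · exact le_antisymm hxy hyx
        · exact absurd (hvx.trans hxy) hvy
        · exact absurd (huy.trans hyx) hux
        · rcases hC.total hu hv with huv | hvu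
          · exact absurd (huv.trans hvx) hux
          · exact absurd (hvu.trans huy) hvy }
  obtain ⟨s, hs, hrs⟩ := extend_partialOrder r
  refine ⟨linearOrderOfIsLinearOrder s, fun x y hxy => hrs _ _ (Or.inl hxy), fun c hc x hcx => ?_⟩
  have hxc : s x c := hrs _ _ (Or.inr ⟨c, hc, le_rfl, hcx⟩)
  exact ⟨hxc, fun hcx' => hcx (antisymm_of s hcx' hxc ▸ le_rfl)⟩

theorem hasRealizer_of_isChainColoring [Fintype α] {k : ℕ} {f : α → ℕ}
    (hf : IsChainColoring univ k f) : HasRealizer α k := by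
  choose L hL hLC using fun i : Fin k =>
    exists_isLinExt_lt_of_not_le (C := {x | f x = i}) fun x hx y hy _ =>
      hf.2 x (mem_univ x) y (mem_univ y) (hx.trans hy.symm)
  refine ⟨L, hL, fun x y hxy => by_contra fun hnxy => ?_⟩
  have hlt := hLC ⟨f x, hf.1 x (mem_univ x)⟩ x rfl y hnxy
  exact ((L _).lt_iff_le_not_ge y x).1 hlt |>.2 (hxy _)

end LinearExtension

/-- the order dimension of a finite poset is at most its width, the
maximum size of an antichain. -/
theorem stmt6 {α : Type*} [Fintype α] [PartialOrder α] :
    pdim α ≤ sSup {n : ℕ | ∃ A : Finset α, IsAntichain (· ≤ ·) (A : Set α) ∧ A.card = n} := by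
  obtain ⟨f, hf⟩ := exists_isChainColoring_width (univ : Finset α)
  obtain ⟨A, -, hA, hAw⟩ := (univ : Finset α).exists_isAntichain_card_eq_width
  have hbdd : BddAbove {n : ℕ | ∃ A : Finset α, IsAntichain (· ≤ ·) (A : Set α) ∧ A.card = n} :=
    ⟨Fintype.card α, by rintro _ ⟨B, -, rfl⟩; exact card_le_univ B⟩
  calc pdim α ≤ (univ : Finset α).width := Nat.sInf_le (hasRealizer_of_isChainColoring hf)
    _ ≤ _ := le_csSup hbdd ⟨A, hA, hAw⟩
end

section
/- For every finite poset P there exists a finite poset Q containing P as an induced subposet such that P and Q have the same height, the cover graph of Q is obtained from the cover graph of P by adding vertices of degree 1, and dim(P) ≤ dim(Min(Q), Max(Q)). -/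
/-- `β`, with `f : α → β`, is a suitable min-max extension of the poset `α`:
`f` embeds `α` as an induced subposet, cover relations among image points are those
of `α`, each new element has exactly one neighbour in the cover graph of `β`
(a degree-1 vertex), heights agree (same strictly increasing chains lengths), and
`dim α ≤ dim(Min β, Max β)`. -/
def GoodMinMaxExtension (α β : Type) [PartialOrder α] [PartialOrder β] : Prop :=
  ∃ f : α → β,
    (∀ x y : α, f x ≤ f y ↔ x ≤ y) ∧
    (∀ x y : α, f x ⋖ f y ↔ x ⋖ y) ∧
    (∀ b : β, b ∉ Set.range f → ∃! z : β, z ⋖ b ∨ b ⋖ z) ∧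
    (∀ n : ℕ, (∃ c : Fin n → α, StrictMono c) ↔ (∃ c : Fin n → β, StrictMono c)) ∧
    pdim α ≤ dimAB β (minimalSet β) (maximalSet β)

section LinearExtensions

variable {γ : Type*} [PartialOrder γ]

lemma exists_isLinExt_of_le (r : γ → γ → Prop) [IsPartialOrder γ r]
    (hr : ∀ x y, x ≤ y → r x y) :
    ∃ L : LinearOrder γ, IsLinExt γ L ∧ ∀ x y, r x y → L.le x y := by
  obtain ⟨s, hs, hrs⟩ := extend_partialOrder r
  exact ⟨{ le := s
           lt := fun x y => s x y ∧ ¬ s y x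
           le_refl := hs.refl
           le_trans := hs.trans
           lt_iff_le_not_ge := fun _ _ => Iff.rfl
           le_antisymm := hs.antisymm
           le_total := hs.total
           toDecidableLE := Classical.decRel _ },
    fun x y h => hrs x y (hr x y h), hrs⟩

lemma exists_isLinExt : ∃ L : LinearOrder γ, IsLinExt γ L :=
  (exists_isLinExt_of_le (· ≤ ·) fun _ _ => id).imp fun _ h => h.1

/-- `≤` enlarged by all pairs `(x, y)` with `x ≤ b` and `a ≤ y` is still a partial order. -/
lemma exists_isLinExt_lt_of_incompP {a b : γ} (hab : IncompP γ a b) :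
    ∃ L : LinearOrder γ, IsLinExt γ L ∧ L.lt b a := by
  let r : γ → γ → Prop := fun x y => x ≤ y ∨ (x ≤ b ∧ a ≤ y)
  have : IsPartialOrder γ r :=
    { refl := fun _ => Or.inl le_rfl
      trans := by
        rintro x y z (hxy | ⟨hxb, hay⟩) (hyz | ⟨hyb, haz⟩)
        · exact Or.inl (hxy.trans hyz)
        · exact Or.inr ⟨hxy.trans hyb, haz⟩
        · exact Or.inr ⟨hxb, hay.trans hyz⟩
        · exact Or.inr ⟨hxb, haz⟩
      antisymm := by
        rintro x y (hxy | ⟨hxb, hay⟩) (hyx | ⟨hyb, hax⟩)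
        · exact le_antisymm hxy hyx
        · exact absurd (hax.trans (hxy.trans hyb)) hab.1
        · exact absurd (hay.trans (hyx.trans hxb)) hab.1
        · exact absurd (hay.trans hyb) hab.1 }
  obtain ⟨L, hL, hrL⟩ := exists_isLinExt_of_le r fun _ _ => Or.inl
  have hba : L.le b a := hrL b a (Or.inr ⟨le_rfl, le_rfl⟩)
  refine ⟨L, hL, (L.lt_iff_le_not_ge b a).2 ⟨hba, fun hab' => hab.1 ?_⟩⟩
  exact (L.le_antisymm a b hab' hba).le

lemma reversibleSet_of_subsingleton {I : Set (γ × γ)} (hI : I.Subsingleton)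
    (hinc : ∀ p ∈ I, IncompP γ p.1 p.2) : ReversibleSet γ I := by
  obtain rfl | ⟨p, rfl⟩ := hI.eq_empty_or_singleton
  · obtain ⟨L, hL⟩ := exists_isLinExt (γ := γ)
    exact ⟨L, hL, fun _ => False.elim⟩
  · obtain ⟨L, hL, hlt⟩ := exists_isLinExt_lt_of_incompP (hinc p rfl)
    exact ⟨L, hL, fun q hq => hq ▸ hlt⟩

/-- The singletons, plus one empty block so that `0 < d`. -/
lemma exists_revPart_of_finite [Finite γ] (I : Set (γ × γ))
    (hinc : ∀ p ∈ I, IncompP γ p.1 p.2) : ∃ d, 0 < d ∧ RevPart γ I d := by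
  obtain ⟨n, ⟨e⟩⟩ := Finite.exists_equiv_fin (γ × γ)
  let f : γ × γ → Fin (n + 1) := Fin.castSucc ∘ e
  have hf : Function.Injective f := (Fin.castSucc_injective n).comp e.injective
  refine ⟨n + 1, n.succ_pos, fun i => {p | p ∈ I ∧ f p = i}, ?_, ?_, ?_⟩
  · ext p
    simp
  · exact fun i j hij => Set.disjoint_left.2 fun p hpi hpj => hij (hpi.2.symm.trans hpj.2)
  · exact fun i => reversibleSet_of_subsingleton
      (fun p hp q hq => hf (hp.2.trans hq.2.symm)) fun p hp => hinc p hp.1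

end LinearExtensions

section MinMaxDimension

variable {α β : Type*} [PartialOrder α] [PartialOrder β] {A B : Set β}

/-- Restrict the linear extensions along `f`: a pair `x ∥ y` is reversed by the one that
reverses the pair `(a, b)` with `a ≤ f x` and `f y ≤ b`. -/
lemma hasRealizer_of_revPart (f : α ↪o β)
    (hf : ∀ x y, IncompP α x y → ∃ a b, (a, b) ∈ IncPairs β A B ∧ a ≤ f x ∧ f y ≤ b)
    {d : ℕ} (hd : 0 < d) (hpart : RevPart β (IncPairs β A B) d) : HasRealizer α d := by
  obtain ⟨J, hJ, -, hrev⟩ := hpart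
  choose L hLext hLrev using hrev
  refine ⟨fun i => @LinearOrder.lift' α β (L i) f f.injective,
    fun i x y hxy => hLext i _ _ (f.monotone hxy), fun x y hall => ?_⟩
  by_contra hxy
  by_cases hyx : y ≤ x
  · have hle : (L ⟨0, hd⟩).le (f y) (f x) := hLext _ _ _ (f.monotone hyx)
    exact hxy (f.injective ((L ⟨0, hd⟩).le_antisymm _ _ (hall ⟨0, hd⟩) hle)).le
  · obtain ⟨a, b, hab, hax, hyb⟩ := hf x y ⟨hxy, hyx⟩
    obtain ⟨i, hi⟩ := Set.mem_iUnion.1 (hJ ▸ hab : (a, b) ∈ ⋃ i, J i)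
    have hab_le : (L i).le a b :=
      (L i).le_trans _ _ _ (hLext i _ _ hax) ((L i).le_trans _ _ _ (hall i) (hLext i _ _ hyb))
    exact ((L i).lt_iff_le_not_ge _ _).1 (hLrev i _ hi) |>.2 hab_le

lemma pdim_le_dimAB [Finite β] (f : α ↪o β)
    (hf : ∀ x y, IncompP α x y → ∃ a b, (a, b) ∈ IncPairs β A B ∧ a ≤ f x ∧ f y ≤ b) :
    pdim α ≤ dimAB β A B := by
  obtain ⟨d, hd, hpart⟩ := exists_revPart_of_finite (IncPairs β A B) fun _ hp => hp.2.2
  obtain ⟨hpos, hmin⟩ := Nat.sInf_mem (⟨d, hd, hpart⟩ : {d | 0 < d ∧ RevPart β _ d}.Nonempty)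
  exact Nat.sInf_le (hasRealizer_of_revPart f hf hpos hmin)

end MinMaxDimension

section Leaves

variable {β : Type*} [PartialOrder β] {u w : β}

lemma existsUnique_covBy_of_isMin (hu : IsMin u) (hw : IsLeast (Set.Ioi u) w) :
    ∃! z, z ⋖ u ∨ u ⋖ z := by
  have hcov : u ⋖ w := ⟨hw.1, fun c huc hcw => (hw.2 huc).not_gt hcw⟩
  refine ⟨w, Or.inr hcov, ?_⟩
  rintro z (hzu | huz)
  · exact absurd hzu.lt (isMin_iff_forall_not_lt.1 hu z)
  · exact ((hw.2 huz.lt).lt_or_eq.resolve_left fun hwz => huz.2 hcov.lt hwz).symm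

lemma existsUnique_covBy_of_isMax (hu : IsMax u) (hw : IsGreatest (Set.Iio u) w) :
    ∃! z, z ⋖ u ∨ u ⋖ z := by
  simpa [ExistsUnique, OrderDual.exists, OrderDual.forall, or_comm] using
    existsUnique_covBy_of_isMin (β := βᵒᵈ) hu.toDual hw

end Leaves

inductive LeafExtension.Level
  | low
  | mid
  | high
  deriving DecidableEq

instance : Fintype LeafExtension.Level :=
  ⟨{.low, .mid, .high}, fun l => by cases l <;> decide⟩

open LeafExtension.Level in
/-- `α` itself at level `mid`, a new minimal leaf at level `low` below each non-minimal
element and a new maximal leaf at level `high` above each non-maximal one. -/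
@[ext]
structure LeafExtension (α : Type*) [PartialOrder α] where
  level : LeafExtension.Level
  pt : α
  not_isMin_of_low : level = low → ¬IsMin pt
  not_isMax_of_high : level = high → ¬IsMax pt

namespace LeafExtension

open Level

variable {α : Type*} [PartialOrder α] {u v : LeafExtension α} {x y : α}

instance : PartialOrder (LeafExtension α) where
  le u v := u = v ∨ (u.level ≠ high ∧ v.level ≠ low ∧ u.pt ≤ v.pt)
  le_refl _ := Or.inl rfl
  le_trans := by
    rintro u v w (rfl | ⟨hu, hv, huv⟩) (rfl | ⟨hv', hw, hvw⟩)
    · exact Or.inl rfl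
    · exact Or.inr ⟨hv', hw, hvw⟩
    · exact Or.inr ⟨hu, hv, huv⟩
    · exact Or.inr ⟨hu, hw, huv.trans hvw⟩
  le_antisymm := by
    rintro u v (h | ⟨hu, hv, huv⟩) (h' | ⟨hv', hu', hvu⟩)
    · exact h
    · exact h
    · exact h'.symm
    · ext
      · cases hu₀ : u.level <;> cases hv₀ : v.level <;> simp_all
      · exact le_antisymm huv hvu

instance [Finite α] : Finite (LeafExtension α) :=
  Finite.of_injective (fun u => (u.level, u.pt)) fun _ _ h =>
    LeafExtension.ext (congrArg Prod.fst h) (congrArg Prod.snd h)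

lemma le_def : u ≤ v ↔ u = v ∨ (u.level ≠ high ∧ v.level ≠ low ∧ u.pt ≤ v.pt) := Iff.rfl

lemma lt_iff : u < v ↔ u.level ≠ high ∧ v.level ≠ low ∧ u.pt ≤ v.pt ∧ u ≠ v := by
  rw [lt_iff_le_and_ne, le_def]
  constructor
  · rintro ⟨rfl | h, hne⟩
    exacts [absurd rfl hne, ⟨h.1, h.2.1, h.2.2, hne⟩]
  · exact fun ⟨hu, hv, h, hne⟩ => ⟨Or.inr ⟨hu, hv, h⟩, hne⟩

lemma pt_mono : Monotone (pt : LeafExtension α → α) := by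
  rintro u v (rfl | ⟨-, -, h⟩)
  exacts [le_rfl, h]

def embed : α ↪o LeafExtension α :=
  OrderEmbedding.ofMapLEIff (fun x => ⟨mid, x, nofun, nofun⟩) fun x y =>
    le_def.trans ⟨by rintro (h | ⟨-, -, h⟩); exacts [(congrArg pt h).le, h], fun h =>
      Or.inr ⟨nofun, nofun, h⟩⟩

@[simp] lemma level_embed (x : α) : (embed x).level = mid := rfl
@[simp] lemma pt_embed (x : α) : (embed x).pt = x := rfl

lemma eq_embed_of_level_eq_mid (hu : u.level = mid) : u = embed u.pt := by
  ext <;> simp [hu]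

lemma ordConnected_range_embed : (Set.range (embed : α ↪o LeafExtension α)).OrdConnected := by
  refine ⟨?_⟩
  rintro _ ⟨x, rfl⟩ _ ⟨y, rfl⟩ c ⟨hxc, hcy⟩
  refine ⟨c.pt, (eq_embed_of_level_eq_mid ?_).symm⟩
  rcases le_def.1 hxc with rfl | ⟨-, hc, -⟩
  · rfl
  rcases le_def.1 hcy with rfl | ⟨hc', -, -⟩
  · rfl
  cases h : c.level <;> simp_all

lemma embed_covBy_embed_iff : embed x ⋖ embed y ↔ x ⋖ y :=
  ⟨CovBy.of_image embed, fun h => h.image embed ordConnected_range_embed⟩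

lemma isMin_of_level_eq_low (hu : u.level = low) : IsMin u :=
  isMin_iff_forall_not_lt.2 fun _ h => (lt_iff.1 h).2.1 hu

lemma isMax_of_level_eq_high (hu : u.level = high) : IsMax u :=
  isMax_iff_forall_not_lt.2 fun _ h => (lt_iff.1 h).1 hu

lemma isLeast_Ioi_of_level_eq_low (hu : u.level = low) : IsLeast (Set.Ioi u) (embed u.pt) := by
  refine ⟨lt_iff.2 ⟨by simp [hu], by simp, le_rfl,
    fun h => nomatch hu.symm.trans (congrArg level h)⟩, fun z hz => ?_⟩
  obtain ⟨-, hz, hle, -⟩ := lt_iff.1 hz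
  exact Or.inr ⟨by simp, hz, hle⟩

lemma isGreatest_Iio_of_level_eq_high (hu : u.level = high) :
    IsGreatest (Set.Iio u) (embed u.pt) := by
  refine ⟨lt_iff.2 ⟨by simp, by simp [hu], le_rfl,
    fun h => nomatch hu.symm.trans (congrArg level h.symm)⟩, fun z hz => ?_⟩
  obtain ⟨hz, -, hle, -⟩ := lt_iff.1 hz
  exact Or.inr ⟨hz, by simp, hle⟩

lemma existsUnique_covBy_of_notMem_range (hu : u ∉ Set.range embed) :
    ∃! z, z ⋖ u ∨ u ⋖ z := by
  cases h : u.level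
  · exact existsUnique_covBy_of_isMin (isMin_of_level_eq_low h) (isLeast_Ioi_of_level_eq_low h)
  · exact absurd ⟨u.pt, (eq_embed_of_level_eq_mid h).symm⟩ hu
  · exact existsUnique_covBy_of_isMax (isMax_of_level_eq_high h)
      (isGreatest_Iio_of_level_eq_high h)

lemma isMin_embed (hx : IsMin x) : IsMin (embed x) := by
  refine isMin_iff_forall_not_lt.2 fun w hw => ?_
  obtain ⟨hw_high, -, hle, hne⟩ := lt_iff.1 hw
  have hpt : w.pt = x := hx.eq_of_le hle
  cases h : w.level
  · exact w.not_isMin_of_low h (hpt ▸ hx)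
  · exact hne (hpt ▸ eq_embed_of_level_eq_mid h)
  · exact hw_high h

lemma isMax_embed (hx : IsMax x) : IsMax (embed x) := by
  refine isMax_iff_forall_not_lt.2 fun w hw => ?_
  obtain ⟨-, hw_low, hle, hne⟩ := lt_iff.1 hw
  have hpt : w.pt = x := hx.eq_of_ge hle
  cases h : w.level
  · exact hw_low h
  · exact hne (hpt ▸ eq_embed_of_level_eq_mid h).symm
  · exact w.not_isMax_of_high h (hpt ▸ hx)

lemma exists_isMin_pt_eq_le_embed (x : α) : ∃ a, IsMin a ∧ a.pt = x ∧ a ≤ embed x := by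
  by_cases hx : IsMin x
  · exact ⟨embed x, isMin_embed hx, rfl, le_rfl⟩
  · exact ⟨⟨low, x, fun _ => hx, nofun⟩, isMin_of_level_eq_low rfl, rfl,
      Or.inr ⟨nofun, nofun, le_rfl⟩⟩

lemma exists_isMax_pt_eq_embed_le (x : α) : ∃ b, IsMax b ∧ b.pt = x ∧ embed x ≤ b := by
  by_cases hx : IsMax x
  · exact ⟨embed x, isMax_embed hx, rfl, le_rfl⟩
  · exact ⟨⟨high, x, nofun, fun _ => hx⟩, isMax_of_level_eq_high rfl, rfl,
      Or.inr ⟨nofun, nofun, le_rfl⟩⟩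

lemma exists_mem_incPairs_le_embed (hxy : IncompP α x y) :
    ∃ a b, (a, b) ∈ IncPairs _ (minimalSet (LeafExtension α)) (maximalSet _) ∧
      a ≤ embed x ∧ embed y ≤ b := by
  obtain ⟨a, ha, rfl, hax⟩ := exists_isMin_pt_eq_le_embed x
  obtain ⟨b, hb, rfl, hyb⟩ := exists_isMax_pt_eq_embed_le y
  exact ⟨a, b, ⟨fun _ => ha.eq_of_le, fun _ => hb.eq_of_ge,
    fun h => hxy.1 (pt_mono h), fun h => hxy.2 (pt_mono h)⟩, hax, hyb⟩

/-- Send each leaf strictly below resp. above its attachment point; then only a comparison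
between two `mid` elements could collapse, and those are strict in `α` already. -/
lemma exists_strictMono_retraction : ∃ g : LeafExtension α → α, StrictMono g := by
  have hex : ∀ u : LeafExtension α, ∃ a, (u.level ≠ high → a ≤ u.pt) ∧
      (u.level ≠ low → u.pt ≤ a) ∧ (u.level ≠ mid → a ≠ u.pt) := fun u => by
    cases h : u.level
    · obtain ⟨a, ha⟩ := not_isMin_iff.1 (u.not_isMin_of_low h)
      exact ⟨a, fun _ => ha.le, nofun, fun _ => ha.ne⟩
    · exact ⟨u.pt, fun _ => le_rfl, fun _ => le_rfl, nofun⟩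
    · obtain ⟨a, ha⟩ := not_isMax_iff.1 (u.not_isMax_of_high h)
      exact ⟨a, nofun, fun _ => ha.le, fun _ => ha.ne'⟩
  choose g hg using hex
  refine ⟨g, fun u v huv => ?_⟩
  obtain ⟨hu, hv, hle, hne⟩ := lt_iff.1 huv
  have hgu := (hg u).1 hu
  have hgv := (hg v).2.1 hv
  refine lt_of_le_of_ne (hgu.trans (hle.trans hgv)) fun heq => hne ?_
  have hptu : g u = u.pt := hgu.antisymm (hle.trans (hgv.trans heq.ge))
  have hptv : g v = v.pt := (hgv.antisymm (heq.ge.trans (hgu.trans hle))).symm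
  have hmidu : u.level = mid := by_contra fun h => (hg u).2.2 h hptu
  have hmidv : v.level = mid := by_contra fun h => (hg v).2.2 h hptv
  rw [eq_embed_of_level_eq_mid hmidu, eq_embed_of_level_eq_mid hmidv, ← hptu, ← hptv, heq]

end LeafExtension

/-- every finite poset `P` has an extension `Q` containing it as an induced
subposet, of the same height, whose cover graph adds only degree-1 vertices, and with
`dim P ≤ dim(Min Q, Max Q)`. -/
theorem stmt8 (α : Type) [Fintype α] [PartialOrder α] :
    ∃ (β : Type) (_ : Fintype β) (iP : PartialOrder β),
      @GoodMinMaxExtension α β _ iP := by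
  let e : α ↪o LeafExtension α := LeafExtension.embed
  obtain ⟨g, hg⟩ := LeafExtension.exists_strictMono_retraction (α := α)
  refine ⟨LeafExtension α, Fintype.ofFinite _, inferInstance, e,
    fun _ _ => e.le_iff_le, fun _ _ => LeafExtension.embed_covBy_embed_iff,
    fun _ => LeafExtension.existsUnique_covBy_of_notMem_range, fun n => ⟨?_, ?_⟩,
    pdim_le_dimAB e fun _ _ => LeafExtension.exists_mem_incPairs_le_embed⟩
  · rintro ⟨c, hc⟩
    exact ⟨e ∘ c, e.strictMono.comp hc⟩
  · rintro ⟨c, hc⟩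
    exact ⟨g ∘ c, hg.comp hc⟩
end

section
/- With the unfolding A_0, B_1, A_1, B_2, … of a finite connected poset P from x_0 ∈ Min(P) ∪ Max(P): if an element x lies in the upset of A_i for some i ≥ 1, then x lies in the downset of B_i or of B_{i+1}, but in no downset of B_j with j ∉ {i, i+1}; if x lies in the upset of A_0, then x lies only in the downset of B_1. Dually, if x lies in the downset of B_i (i ≥ 1), then x lies in the upset of A_{i−1} or of A_i, but in no upset of A_j with j ∉ {i−1, i}. -/
section Unfold
variable (α : Type*) [PartialOrder α]

/-- The upset of a set. -/
def UpS (S : Set α) : Set α := {x | ∃ s ∈ S, s ≤ x}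

/-- The downset of a set. -/
def DnS (S : Set α) : Set α := {x | ∃ s ∈ S, x ≤ s}

/-- The poset `α` is connected (w.r.t. its comparability/cover graph). -/
def PosetConnected : Prop :=
  ∀ x y : α, Relation.ReflTransGen (fun u v : α => u ≤ v ∨ v ≤ u) x y

/-- Auxiliary recursion for the unfolding of `α` from starting sets `A0, B1`:
`unfoldAux A0 B1 i = ((A_i, B_{i+1}), (A_0 ∪ ⋯ ∪ A_i, B_1 ∪ ⋯ ∪ B_{i+1}))`. -/
def unfoldAux (A0 B1 : Set α) : ℕ → (Set α × Set α) × (Set α × Set α)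
  | 0 => ((A0, B1), (A0, B1))
  | i + 1 =>
    let p := unfoldAux A0 B1 i
    let Ai : Set α := {a | a ∈ minimalSet α ∧ a ∉ p.2.1 ∧ ∃ b ∈ p.1.2, a ≤ b}
    let Bi : Set α := {b | b ∈ maximalSet α ∧ b ∉ p.2.2 ∧ ∃ a ∈ Ai, a ≤ b}
    ((Ai, Bi), (p.2.1 ∪ Ai, p.2.2 ∪ Bi))

/-- The set `A_i` of the unfolding. -/
def uA (A0 B1 : Set α) (i : ℕ) : Set α := (unfoldAux α A0 B1 i).1.1

/-- The set `B_j` (for `j ≥ 1`) of the unfolding; `uB 0 = ∅` by convention. -/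
def uB (A0 B1 : Set α) : ℕ → Set α
  | 0 => ∅
  | i + 1 => (unfoldAux α A0 B1 i).1.2

/-- The starting data of the unfolding of `α` from `x0 ∈ Min(α) ∪ Max(α)`. -/
def UnfoldStart (x0 : α) (A0 B1 : Set α) : Prop :=
  (x0 ∈ minimalSet α ∧ A0 = {x0} ∧ B1 = {b | b ∈ maximalSet α ∧ x0 ≤ b}) ∨
  (x0 ∈ maximalSet α ∧ A0 = (∅ : Set α) ∧ B1 = {x0})

/-- `α(x)`: the least `i` with `x ∈ Up(A_i)`. -/
noncomputable def alphaF (A0 B1 : Set α) (x : α) : ℕ :=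
  sInf {i | x ∈ UpS α (uA α A0 B1 i)}

/-- `β(x)`: the least `j ≥ 1` with `x ∈ D(B_j)`. -/
noncomputable def betaF (A0 B1 : Set α) (x : α) : ℕ :=
  sInf {j | 1 ≤ j ∧ x ∈ DnS α (uB α A0 B1 j)}

/-- `y` is a valid parent of `x` in the unfolding. -/
def IsParentOf (A0 B1 : Set α) (x y : α) : Prop :=
  (betaF α A0 B1 x = alphaF α A0 B1 x ∧ x ⋖ y ∧
      ∃ b ∈ uB α A0 B1 (betaF α A0 B1 x), y ≤ b) ∨
  (betaF α A0 B1 x = alphaF α A0 B1 x + 1 ∧ y ⋖ x ∧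
      ∃ a ∈ uA α A0 B1 (alphaF α A0 B1 x), a ≤ y)

end Unfold

/-!
If `a ∈ A_i`, `b ∈ B_j` and `a ≤ b`, then `i ≤ j ≤ i + 1`: the maximal element `b` above `a`
is caught by the unfolding no later than `B_{i+1}`, the minimal element `a` below `b` no later
than `A_j`, and the classes `A_k` (resp. `B_k`) are pairwise disjoint. An arbitrary `x` lies
between a minimal and a maximal element of the finite poset, which reduces every claim about
`Up(A_i)` and `D(B_j)` to this one.
-/

section Unfolding
variable {α : Type*} [PartialOrder α] {A0 B1 : Set α}

lemma exists_mem_minimalSet_le [Finite α] (x : α) : ∃ a ∈ minimalSet α, a ≤ x := by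
  obtain ⟨a, hax, -, ha⟩ := Set.finite_univ.exists_le_minimal (Set.mem_univ x)
  exact ⟨a, fun y hya => le_antisymm hya (ha trivial hya), hax⟩

lemma exists_mem_maximalSet_ge [Finite α] (x : α) : ∃ b ∈ maximalSet α, x ≤ b := by
  obtain ⟨b, hxb, -, hb⟩ := Set.finite_univ.exists_le_maximal (Set.mem_univ x)
  exact ⟨b, fun y hby => le_antisymm (hb trivial hby) hby, hxb⟩

lemma mem_uA_succ {m : ℕ} {a : α} : a ∈ uA α A0 B1 (m + 1) ↔
    a ∈ minimalSet α ∧ a ∉ (unfoldAux α A0 B1 m).2.1 ∧ ∃ b ∈ uB α A0 B1 (m + 1), a ≤ b :=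
  Iff.rfl

lemma mem_uB_succ_succ {m : ℕ} {b : α} : b ∈ uB α A0 B1 (m + 2) ↔
    b ∈ maximalSet α ∧ b ∉ (unfoldAux α A0 B1 m).2.2 ∧ ∃ a ∈ uA α A0 B1 (m + 1), a ≤ b :=
  Iff.rfl

lemma mem_unfoldAux_snd_fst_iff {m : ℕ} {a : α} :
    a ∈ (unfoldAux α A0 B1 m).2.1 ↔ ∃ k ≤ m, a ∈ uA α A0 B1 k := by
  induction m with
  | zero => simp [unfoldAux, uA]
  | succ m ih =>
    change a ∈ (unfoldAux α A0 B1 m).2.1 ∪ uA α A0 B1 (m + 1) ↔ _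
    simp only [Set.mem_union, ih, Nat.le_succ_iff, or_and_right, exists_or, exists_eq_left]

lemma mem_unfoldAux_snd_snd_iff {m : ℕ} {b : α} :
    b ∈ (unfoldAux α A0 B1 m).2.2 ↔ ∃ k ≤ m + 1, b ∈ uB α A0 B1 k := by
  induction m with
  | zero => simp [unfoldAux, uB, Nat.le_one_iff_eq_zero_or_eq_one, or_and_right, exists_or]
  | succ m ih =>
    change b ∈ (unfoldAux α A0 B1 m).2.2 ∪ uB α A0 B1 (m + 2) ↔ _
    simp only [Set.mem_union, ih, Nat.le_succ_iff, or_and_right, exists_or, exists_eq_left]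

lemma eq_of_mem_uA_of_mem_uA {i j : ℕ} {a : α} (hi : a ∈ uA α A0 B1 i)
    (hj : a ∈ uA α A0 B1 j) : i = j := by
  wlog hij : i < j generalizing i j
  · rcases (not_lt.mp hij).eq_or_lt with h | h
    exacts [h.symm, (this hj hi h).symm]
  obtain ⟨m, rfl⟩ : ∃ m, j = m + 1 := ⟨j - 1, by omega⟩
  exact ((mem_uA_succ.mp hj).2.1 (mem_unfoldAux_snd_fst_iff.mpr ⟨i, by omega, hi⟩)).elim

lemma pos_of_mem_uB {j : ℕ} {b : α} (hb : b ∈ uB α A0 B1 j) : 0 < j := by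
  obtain _ | j := j
  exacts [absurd hb (Set.notMem_empty b), j.succ_pos]

lemma pos_of_mem_dnS_uB {j : ℕ} {x : α} (hx : x ∈ DnS α (uB α A0 B1 j)) : 0 < j :=
  hx.elim fun _ hb => pos_of_mem_uB hb.1

lemma eq_of_mem_uB_of_mem_uB {i j : ℕ} {b : α} (hi : b ∈ uB α A0 B1 i)
    (hj : b ∈ uB α A0 B1 j) : i = j := by
  wlog hij : i < j generalizing i j
  · rcases (not_lt.mp hij).eq_or_lt with h | h
    exacts [h.symm, (this hj hi h).symm]
  have := pos_of_mem_uB hi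
  obtain ⟨m, rfl⟩ : ∃ m, j = m + 2 := ⟨j - 2, by omega⟩
  exact ((mem_uB_succ_succ.mp hj).2.1 (mem_unfoldAux_snd_snd_iff.mpr ⟨i, by omega, hi⟩)).elim

lemma exists_mem_uA_of_le_mem_uB {j : ℕ} {a b : α} (ha : a ∈ minimalSet α)
    (hb : b ∈ uB α A0 B1 j) (hab : a ≤ b) : ∃ k ≤ j, a ∈ uA α A0 B1 k := by
  obtain _ | m := j
  · exact absurd hb (Set.notMem_empty b)
  by_cases hseen : a ∈ (unfoldAux α A0 B1 m).2.1
  · obtain ⟨k, hk, hak⟩ := mem_unfoldAux_snd_fst_iff.mp hseen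
    exact ⟨k, by omega, hak⟩
  · exact ⟨m + 1, le_rfl, mem_uA_succ.mpr ⟨ha, hseen, b, hb, hab⟩⟩

lemma exists_mem_upS_uA_of_mem_dnS_uB [Finite α] {j : ℕ} {x : α}
    (hx : x ∈ DnS α (uB α A0 B1 j)) : ∃ k ≤ j, x ∈ UpS α (uA α A0 B1 k) := by
  obtain ⟨b, hb, hxb⟩ := hx
  obtain ⟨a, ha_min, hax⟩ := exists_mem_minimalSet_le x
  obtain ⟨k, hk, hak⟩ := exists_mem_uA_of_le_mem_uB ha_min hb (hax.trans hxb)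
  exact ⟨k, hk, a, hak, hax⟩

end Unfolding

structure IsUnfoldSeed {α : Type*} [PartialOrder α] (A0 B1 : Set α) : Prop where
  subset_minimalSet : A0 ⊆ minimalSet α
  subset_maximalSet : B1 ⊆ maximalSet α
  mem_of_le : ∀ a ∈ A0, ∀ b ∈ maximalSet α, a ≤ b → b ∈ B1

namespace IsUnfoldSeed
variable {α : Type*} [PartialOrder α] {A0 B1 : Set α}

lemma _root_.UnfoldStart.isUnfoldSeed {x0 : α} (h : UnfoldStart α x0 A0 B1) :
    IsUnfoldSeed A0 B1 := by
  rcases h with ⟨hx0, rfl, rfl⟩ | ⟨hx0, rfl, rfl⟩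
  · exact ⟨by simpa using hx0, fun b hb => hb.1, fun a ha b hb hab => ⟨hb, ha ▸ hab⟩⟩
  · exact ⟨Set.empty_subset _, by simpa using hx0, fun a ha => absurd ha (Set.notMem_empty a)⟩

variable (hs : IsUnfoldSeed A0 B1)
include hs

lemma uA_subset_minimalSet (i : ℕ) : uA α A0 B1 i ⊆ minimalSet α := by
  cases i with
  | zero => exact hs.subset_minimalSet
  | succ m => exact fun _ ha => (mem_uA_succ.mp ha).1

lemma uB_subset_maximalSet (j : ℕ) : uB α A0 B1 j ⊆ maximalSet α := by
  match j with
  | 0 => exact Set.empty_subset _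
  | 1 => exact hs.subset_maximalSet
  | m + 2 => exact fun _ hb => (mem_uB_succ_succ.mp hb).1

lemma exists_mem_uB_of_mem_uA_le {i : ℕ} {a b : α} (hb : b ∈ maximalSet α)
    (ha : a ∈ uA α A0 B1 i) (hab : a ≤ b) : ∃ k ≤ i + 1, b ∈ uB α A0 B1 k := by
  cases i with
  | zero => exact ⟨1, le_rfl, hs.mem_of_le a ha b hb hab⟩
  | succ m =>
    by_cases hseen : b ∈ (unfoldAux α A0 B1 m).2.2
    · obtain ⟨k, hk, hbk⟩ := mem_unfoldAux_snd_snd_iff.mp hseen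
      exact ⟨k, by omega, hbk⟩
    · exact ⟨m + 2, le_rfl, mem_uB_succ_succ.mpr ⟨hb, hseen, a, ha, hab⟩⟩

lemma le_and_le_succ_of_mem_uA_le_mem_uB {i j : ℕ} {a b : α} (ha : a ∈ uA α A0 B1 i)
    (hb : b ∈ uB α A0 B1 j) (hab : a ≤ b) : i ≤ j ∧ j ≤ i + 1 := by
  obtain ⟨k, hkj, hak⟩ := exists_mem_uA_of_le_mem_uB (hs.uA_subset_minimalSet i ha) hb hab
  obtain ⟨l, hli, hbl⟩ := hs.exists_mem_uB_of_mem_uA_le (hs.uB_subset_maximalSet j hb) ha hab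
  rw [eq_of_mem_uA_of_mem_uA hak ha] at hkj
  rw [eq_of_mem_uB_of_mem_uB hbl hb] at hli
  exact ⟨hkj, hli⟩

lemma le_and_le_succ_of_mem_upS_of_mem_dnS {i j : ℕ} {x : α}
    (hA : x ∈ UpS α (uA α A0 B1 i)) (hB : x ∈ DnS α (uB α A0 B1 j)) : i ≤ j ∧ j ≤ i + 1 := by
  obtain ⟨a, ha, hax⟩ := hA
  obtain ⟨b, hb, hxb⟩ := hB
  exact hs.le_and_le_succ_of_mem_uA_le_mem_uB ha hb (hax.trans hxb)

lemma exists_mem_dnS_uB_of_mem_upS_uA [Finite α] {i : ℕ} {x : α}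
    (hx : x ∈ UpS α (uA α A0 B1 i)) : ∃ j ≤ i + 1, x ∈ DnS α (uB α A0 B1 j) := by
  obtain ⟨a, ha, hax⟩ := hx
  obtain ⟨b, hb_max, hxb⟩ := exists_mem_maximalSet_ge x
  obtain ⟨j, hj, hbj⟩ := hs.exists_mem_uB_of_mem_uA_le hb_max ha (hax.trans hxb)
  exact ⟨j, hj, b, hbj, hxb⟩

end IsUnfoldSeed

theorem stmt10_general {α : Type*} [Fintype α] [PartialOrder α]
    (x0 : α) (A0 B1 : Set α) (hstart : UnfoldStart α x0 A0 B1) (x : α) :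
    (∀ i : ℕ, 1 ≤ i → x ∈ UpS α (uA α A0 B1 i) →
      ((x ∈ DnS α (uB α A0 B1 i) ∨ x ∈ DnS α (uB α A0 B1 (i + 1))) ∧
        ∀ j : ℕ, 1 ≤ j → x ∈ DnS α (uB α A0 B1 j) → j = i ∨ j = i + 1)) ∧
    (x ∈ UpS α (uA α A0 B1 0) →
      (x ∈ DnS α (uB α A0 B1 1) ∧
        ∀ j : ℕ, 1 ≤ j → x ∈ DnS α (uB α A0 B1 j) → j = 1)) ∧
    (∀ i : ℕ, 1 ≤ i → x ∈ DnS α (uB α A0 B1 i) →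
      ((x ∈ UpS α (uA α A0 B1 (i - 1)) ∨ x ∈ UpS α (uA α A0 B1 i)) ∧
        ∀ j : ℕ, x ∈ UpS α (uA α A0 B1 j) → j = i - 1 ∨ j = i)) := by
  have hs := hstart.isUnfoldSeed
  refine ⟨fun i _ hA => ⟨?_, fun j _ hB => ?_⟩, fun hA => ⟨?_, fun j _ hB => ?_⟩,
    fun i hi hB => ⟨?_, fun j hA => ?_⟩⟩
  · obtain ⟨j, -, hB⟩ := hs.exists_mem_dnS_uB_of_mem_upS_uA hA
    have := hs.le_and_le_succ_of_mem_upS_of_mem_dnS hA hB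
    rcases (by omega : j = i ∨ j = i + 1) with rfl | rfl
    exacts [Or.inl hB, Or.inr hB]
  · have := hs.le_and_le_succ_of_mem_upS_of_mem_dnS hA hB
    omega
  · obtain ⟨j, hj, hB⟩ := hs.exists_mem_dnS_uB_of_mem_upS_uA hA
    obtain rfl : j = 1 := by have := pos_of_mem_dnS_uB hB; omega
    exact hB
  · have := hs.le_and_le_succ_of_mem_upS_of_mem_dnS hA hB
    omega
  · obtain ⟨k, -, hA⟩ := exists_mem_upS_uA_of_mem_dnS_uB hB
    have := hs.le_and_le_succ_of_mem_upS_of_mem_dnS hA hB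
    rcases (by omega : k = i - 1 ∨ k = i) with rfl | rfl
    exacts [Or.inl hA, Or.inr hA]
  · have := hs.le_and_le_succ_of_mem_upS_of_mem_dnS hA hB
    omega

/-- membership properties of upsets/downsets of the unfolding classes. -/
theorem stmt10 {α : Type*} [Fintype α] [PartialOrder α] [Nontrivial α]
    (hconn : PosetConnected α)
    (x0 : α) (A0 B1 : Set α) (hstart : UnfoldStart α x0 A0 B1) (x : α) :
    (∀ i : ℕ, 1 ≤ i → x ∈ UpS α (uA α A0 B1 i) →
      ((x ∈ DnS α (uB α A0 B1 i) ∨ x ∈ DnS α (uB α A0 B1 (i + 1))) ∧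
        ∀ j : ℕ, 1 ≤ j → x ∈ DnS α (uB α A0 B1 j) → j = i ∨ j = i + 1)) ∧
    (x ∈ UpS α (uA α A0 B1 0) →
      (x ∈ DnS α (uB α A0 B1 1) ∧
        ∀ j : ℕ, 1 ≤ j → x ∈ DnS α (uB α A0 B1 j) → j = 1)) ∧
    (∀ i : ℕ, 1 ≤ i → x ∈ DnS α (uB α A0 B1 i) →
      ((x ∈ UpS α (uA α A0 B1 (i - 1)) ∨ x ∈ UpS α (uA α A0 B1 i)) ∧
        ∀ j : ℕ, x ∈ UpS α (uA α A0 B1 j) → j = i - 1 ∨ j = i)) :=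
  stmt10_general x0 A0 B1 hstart x
end
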